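/- arXiv:2309.02763 — 7 statements merged into one kernel-verified Lean document; each statement's English description precedes it below -/
import Mathlib

section
/- For every integer n ≥ 1, every one-way deterministic finite automaton (DFA) over the two-letter alphabet {a,b} whose accepted language equals K_n has at least 2^(2^n) states. -/
/-- The language `K_n`: words of the form `x₁ ⋯ x_k · x` where `k > 0`, each block
`x_i` and `x` has length `n` over the alphabet `{a,b}` (encoded as `Bool`), and
`x_j = x` for some `j`. -/
def Kn (n : ℕ) : Language Bool :=
  { w | ∃ (l : List (List Bool)) (x : List Bool),
      l ≠ [] ∧ (∀ y ∈ l, y.length = n) ∧ x.length = n ∧ x ∈ l ∧ w = l.flatten ++ x }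

/-- The language `J_n`: words of the form `x · x₁ ⋯ x_k` where `k > 0`, each block
`x_i` and `x` has length `n` over the alphabet `{a,b}` (encoded as `Bool`), and
`x_j = x` for some `j`. -/
def Jn (n : ℕ) : Language Bool :=
  { w | ∃ (l : List (List Bool)) (x : List Bool),
      l ≠ [] ∧ (∀ y ∈ l, y.length = n) ∧ x.length = n ∧ x ∈ l ∧ w = x ++ l.flatten }

private lemma join_unique {n : ℕ} (hn : 1 ≤ n) :
    ∀ (l₁ l₂ : List (List Bool)), (∀ y ∈ l₁, y.length = n) → (∀ y ∈ l₂, y.length = n) →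
      l₁.flatten = l₂.flatten → l₁ = l₂ := by
  intro l₁
  induction l₁ with
  | nil =>
    intro l₂ _ h2 hj
    cases l₂ with
    | nil => rfl
    | cons b t =>
      exfalso
      simp only [List.flatten_nil, List.flatten_cons] at hj
      have hb := h2 b (by simp)
      have : b = [] := (List.append_eq_nil_iff.mp hj.symm).1
      simp [this] at hb; omega
  | cons a t ih =>
    intro l₂ h1 h2 hj
    cases l₂ with
    | nil =>
      exfalso
      simp only [List.flatten_nil, List.flatten_cons] at hj
      have ha := h1 a (by simp)
      have : a = [] := (List.append_eq_nil_iff.mp hj).1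
      simp [this] at ha; omega
    | cons b t2 =>
      simp only [List.flatten_cons] at hj
      have hlen : a.length = b.length := by rw [h1 a (by simp), h2 b (by simp)]
      obtain ⟨hab, hjt⟩ := List.append_inj hj hlen
      subst hab
      rw [ih t2 (fun y hy => h1 y (by simp [hy])) (fun y hy => h2 y (by simp [hy])) hjt]

private noncomputable def wordOf (n : ℕ) (S : Finset (Fin n → Bool)) : List Bool :=
  (S.toList.map (fun v => List.ofFn v)).flatten

private lemma mem_Kn_iff {n : ℕ} (hn : 1 ≤ n) (S : Finset (Fin n → Bool))
    (v : Fin n → Bool) : wordOf n S ++ List.ofFn v ∈ Kn n ↔ v ∈ S := by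
  constructor
  · rintro ⟨l, x, hne, hl, hx, hxl, hw⟩
    have hlen : (List.ofFn v).length = x.length := by simp [hx]
    obtain ⟨hj, hvx⟩ := List.append_inj' hw hlen
    have hmaplen : ∀ y ∈ S.toList.map (fun v => List.ofFn v), y.length = n := by
      intro y hy
      obtain ⟨u, _, rfl⟩ := List.mem_map.mp hy
      simp
    have := join_unique hn (S.toList.map (fun v => List.ofFn v)) l hmaplen hl hj
    rw [← this, ← hvx] at hxl
    obtain ⟨u, hu, huv⟩ := List.mem_map.mp hxl
    have : u = v := List.ofFn_injective huv
    rwa [← this, ← Finset.mem_toList]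
  · intro hv
    refine ⟨S.toList.map (fun v => List.ofFn v), List.ofFn v, ?_, ?_, by simp, ?_, rfl⟩
    · simp only [ne_eq, List.map_eq_nil_iff, Finset.toList_eq_nil]
      rintro rfl; exact absurd hv (Finset.notMem_empty v)
    · intro y hy
      obtain ⟨u, _, rfl⟩ := List.mem_map.mp hy
      simp
    · exact List.mem_map.mpr ⟨v, Finset.mem_toList.mpr hv, rfl⟩

/-- Every DFA over `{a,b}` accepting exactly `K_n` has at least `2^(2^n)` states. -/
theorem dfa_Kn_states (n : ℕ) (hn : 1 ≤ n) (σ : Type) [Fintype σ]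
    (M : DFA Bool σ) (h : M.accepts = Kn n) :
    2 ^ (2 ^ n) ≤ Fintype.card σ := by
  have hacc : ∀ (S : Finset (Fin n → Bool)) (v : Fin n → Bool),
      (M.evalFrom (M.eval (wordOf n S)) (List.ofFn v) ∈ M.accept) ↔ v ∈ S := by
    intro S v
    rw [← mem_Kn_iff hn S v, ← h, DFA.mem_accepts]
    unfold DFA.eval
    rw [DFA.evalFrom_of_append]
  have key : Function.Injective (fun S : Finset (Fin n → Bool) => M.eval (wordOf n S)) := by
    intro S T hST
    simp only at hST
    ext v
    rw [← hacc S v, ← hacc T v, hST]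
  calc 2 ^ (2 ^ n) = Fintype.card (Finset (Fin n → Bool)) := by simp
    _ ≤ Fintype.card σ := Fintype.card_le_of_injective _ key
end

section
/- For every integer n ≥ 1, every one-way nondeterministic finite automaton (NFA) over the two-letter alphabet {a,b} whose accepted language equals K_n has at least 2^n states. -/
namespace NFAAux

variable {α : Type*} {σ : Type*} (M : NFA α σ)

theorem evalFrom_append (S : Set σ) (x y : List α) :
    M.evalFrom S (x ++ y) = M.evalFrom (M.evalFrom S x) y := by
  simp [NFA.evalFrom, List.foldl_append]

theorem mem_evalFrom_iff {p : σ} (S : Set σ) (y : List α) :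
    p ∈ M.evalFrom S y ↔ ∃ q ∈ S, p ∈ M.evalFrom {q} y := by
  induction y generalizing S with
  | nil => simp
  | cons a w ih =>
    have hstep : ∀ T : Set σ, M.evalFrom T (a :: w) = M.evalFrom (M.stepSet T a) w := fun _ => rfl
    rw [hstep, ih]
    constructor
    · rintro ⟨r, hr, hp⟩
      obtain ⟨q, hq, hqr⟩ := M.mem_stepSet.mp hr
      refine ⟨q, hq, ?_⟩
      rw [hstep, ih]
      exact ⟨r, by simpa [NFA.stepSet] using hqr, hp⟩
    · rintro ⟨q, hq, hp⟩
      rw [hstep, ih] at hp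
      obtain ⟨r, hr, hp⟩ := hp
      exact ⟨r, M.mem_stepSet.mpr ⟨q, hq, by simpa [NFA.stepSet] using hr⟩, hp⟩

theorem evalFrom_mono {S T : Set σ} (hST : S ⊆ T) (y : List α) :
    M.evalFrom S y ⊆ M.evalFrom T y := by
  intro p hp
  rw [mem_evalFrom_iff] at hp ⊢
  obtain ⟨q, hq, hp⟩ := hp
  exact ⟨q, hST hq, hp⟩

end NFAAux

theorem join_length_of_blocks {n : ℕ} :
    ∀ l : List (List Bool), (∀ y ∈ l, y.length = n) → l.flatten.length = l.length * n := by
  intro l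
  induction l with
  | nil => simp
  | cons a t ih =>
    intro hlen
    simp only [List.flatten_cons, List.length_append, List.length_cons, Nat.succ_mul]
    rw [hlen a (by simp), ih (fun y hy => hlen y (by simp [hy]))]
    ring

/-- Membership of `x ++ y` with both of length `n ≥ 1` in `Kn n` forces `x = y`. -/
theorem Kn_append_eq {n : ℕ} (hn : 1 ≤ n) {x y : List Bool}
    (hx : x.length = n) (hy : y.length = n) (hxy : x ++ y ∈ Kn n) : x = y := by
  obtain ⟨l, z, hl, hlen, hz, hzl, hw⟩ := hxy
  have hjoin := join_length_of_blocks l hlen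
  have hlength : (x ++ y).length = (l.flatten ++ z).length := by rw [hw]
  simp only [List.length_append, hx, hy, hjoin, hz] at hlength
  have hl1 : l.length = 1 := by
    have hlpos : l.length ≠ 0 := by simpa [List.length_eq_zero_iff] using hl
    nlinarith [Nat.one_le_iff_ne_zero.mpr hlpos]
  obtain ⟨a, ha⟩ : ∃ a, l = [a] := List.length_eq_one_iff.mp hl1
  subst ha
  simp only [List.mem_singleton] at hzl
  subst hzl
  simp only [List.flatten_cons, List.flatten_nil, List.append_nil] at hw
  have hinj := List.append_inj hw (by rw [hx, hz])
  rw [hinj.1, hinj.2]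

/-- Every NFA over `{a,b}` accepting exactly `K_n` has at least `2^n` states. -/
theorem nfa_Kn_states (n : ℕ) (hn : 1 ≤ n) (σ : Type) [Fintype σ]
    (M : NFA Bool σ) (h : M.accepts = Kn n) :
    2 ^ n ≤ Fintype.card σ := by
  classical
  have key : ∀ v : List.Vector Bool n, ∃ q : σ,
      q ∈ M.eval v.toList ∧ ∃ p ∈ M.accept, p ∈ M.evalFrom {q} v.toList := by
    intro v
    have hmem : v.toList ++ v.toList ∈ Kn n :=
      ⟨[v.toList], v.toList, by simp, by simp [v.toList_length],
        v.toList_length, by simp, by simp⟩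
    rw [← h] at hmem
    obtain ⟨p, hp, hpe⟩ := hmem
    have hpe' : p ∈ M.evalFrom (M.eval v.toList) v.toList := by
      show p ∈ M.evalFrom (M.evalFrom M.start v.toList) v.toList
      rw [← NFAAux.evalFrom_append]; exact hpe
    rw [NFAAux.mem_evalFrom_iff] at hpe'
    obtain ⟨q, hq, hqp⟩ := hpe'
    exact ⟨q, hq, p, hp, hqp⟩
  choose f hf1 hf2 using key
  have hinj : Function.Injective f := by
    intro x y hxy
    by_contra hne
    obtain ⟨p, hp, hpe⟩ := hf2 y
    rw [← hxy] at hpe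
    have haccept : x.toList ++ y.toList ∈ M.accepts := by
      refine ⟨p, hp, ?_⟩
      show p ∈ M.evalFrom M.start (x.toList ++ y.toList)
      rw [NFAAux.evalFrom_append]
      exact NFAAux.evalFrom_mono M (Set.singleton_subset_iff.mpr (hf1 x)) _ hpe
    rw [h] at haccept
    have := Kn_append_eq hn x.toList_length y.toList_length haccept
    exact hne (List.Vector.toList_injective this)
  calc 2 ^ n = Fintype.card (List.Vector Bool n) := by simp
    _ ≤ Fintype.card σ := Fintype.card_le_of_injective f hinj
end

section
/- For every integer n ≥ 1, every one-way deterministic finite automaton (DFA) over the two-letter alphabet {a,b} whose accepted language equals J_n has at least 2^n states. -/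
lemma self_append_mem_Jn {n : ℕ} {x : List Bool} (hx : x.length = n) :
    x ++ x ∈ Jn n := ⟨[x], x, by simp, by simpa using hx, hx, by simp, by simp⟩

lemma eq_of_append_mem_Jn {n : ℕ} {x y : List Bool} (hx : x.length = n)
    (hy : y.length = n) (hn : 1 ≤ n) (hm : y ++ x ∈ Jn n) : x = y := by
  obtain ⟨l, z, hl, hlen, hz, hzl, heq⟩ := hm
  have hjoin : l.flatten.length = n * l.length := by
    rw [List.length_flatten]
    rw [List.map_congr_left hlen]
    simp [mul_comm]
  have hlenw : (y ++ x).length = (z ++ l.flatten).length := by rw [heq]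
  simp only [List.length_append, hx, hy, hz, hjoin] at hlenw
  have hl1 : l.length = 1 := by
    have : 0 < l.length := List.length_pos_iff.mpr hl
    nlinarith
  obtain ⟨a, ha⟩ := List.length_eq_one_iff.mp hl1
  subst ha
  simp at hzl
  subst hzl
  simp at heq
  have := List.append_inj heq (by omega)
  obtain ⟨h1, h2⟩ := this
  rw [h1, h2]

/-- Every DFA over `{a,b}` accepting exactly `J_n` has at least `2^n` states. -/
theorem dfa_Jn_states (n : ℕ) (hn : 1 ≤ n) (σ : Type) [Fintype σ]
    (M : DFA Bool σ) (h : M.accepts = Jn n) :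
    2 ^ n ≤ Fintype.card σ := by
  have key : Function.Injective (fun v : Fin n → Bool => M.eval (List.ofFn v)) := by
    intro v w hvw
    simp only at hvw
    set x := List.ofFn v with hxd
    set y := List.ofFn w with hyd
    have hx : x.length = n := by simp [hxd]
    have hy : y.length = n := by simp [hyd]
    have hacc : x ++ x ∈ M.accepts := h ▸ self_append_mem_Jn hx
    rw [DFA.mem_accepts, DFA.eval, DFA.evalFrom_of_append] at hacc
    have hacc2 : y ++ x ∈ M.accepts := by
      rw [DFA.mem_accepts, DFA.eval, DFA.evalFrom_of_append]
      have hvw' : M.evalFrom M.start x = M.evalFrom M.start y := hvw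
      rw [← hvw']
      exact hacc
    have hxy : x = y := eq_of_append_mem_Jn hx hy hn (h ▸ hacc2)
    funext i
    have := congrArg (fun l => l[(i : ℕ)]?) hxy
    simpa [hxd, hyd] using this
  calc 2 ^ n = Fintype.card (Fin n → Bool) := by simp
    _ ≤ Fintype.card σ := Fintype.card_le_of_injective _ key
end

section
/- For every integer n ≥ 1, the language K_n is regular, i.e., there exists a deterministic finite automaton with finitely many states over the alphabet {a,b} whose accepted language is exactly K_n. -/
namespace KnAux


theorem join_eq (α : Type*) : @List.flatten α = @List.flatten α := rfl

/-- the `i`-th block of length `n` in `w` -/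
def blk (n : ℕ) (w : List Bool) (i : ℕ) : List Bool := (w.drop (n * i)).take n

/-- remainders: partial blocks -/
abbrev Rem (n : ℕ) := {l : List Bool // l.length < n}

noncomputable instance remFintype (n : ℕ) : Fintype (Rem n) :=
  Fintype.ofInjective
    (fun r => ((⟨r.1.length, r.2⟩ : Fin n), fun i : Fin n => r.1.getD i false))
    (by
      rintro ⟨a, ha⟩ ⟨b, hb⟩ h
      simp only [Prod.mk.injEq, Fin.mk.injEq] at h
      obtain ⟨hlen, hfun⟩ := h
      refine Subtype.ext ?_
      apply List.ext_getElem hlen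
      intro i h1 h2
      have := congrFun hfun ⟨i, by omega⟩
      simpa [List.getD_eq_getElem?_getD, List.getElem?_eq_getElem, h1, h2] using this)

/-- state type -/
abbrev St (n : ℕ) := Set (List.Vector Bool n) × Rem n × Prop

noncomputable instance stFintype (n : ℕ) : Fintype (St n) := by
  infer_instance

/-- The DFA recognizing `Kn`. -/
def M (n : ℕ) (hn : 1 ≤ n) : DFA Bool (St n) where
  step := fun s c =>
    if h : s.2.1.1.length + 1 = n then
      (insert (⟨s.2.1.1 ++ [c], by simpa using h⟩ : List.Vector Bool n) s.1,
        ⟨[], hn⟩,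
        ((⟨s.2.1.1 ++ [c], by simpa using h⟩ : List.Vector Bool n) ∈ s.1))
    else
      (s.1, ⟨s.2.1.1 ++ [c], by have := s.2.1.2; simp; omega⟩, s.2.2)
  start := (∅, ⟨[], hn⟩, False)
  accept := {s | s.2.1.1 = [] ∧ s.2.2}

/-- The target value of evaluation. -/
def F (n : ℕ) (hn : 1 ≤ n) (w : List Bool) : St n :=
  ({v | ∃ i < w.length / n, v.toList = blk n w i},
   ⟨w.drop (n * (w.length / n)), by
      have h1 := Nat.mod_add_div w.length n
      have h2 := Nat.mod_lt w.length (by omega : 0 < n)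
      simp only [List.length_drop]
      omega⟩,
   (∃ i, i + 1 < w.length / n ∧ blk n w i = blk n w (w.length / n - 1)))

theorem blk_length {n : ℕ} {w : List Bool} {i : ℕ} (h : n * i + n ≤ w.length) :
    (blk n w i).length = n := by
  simp only [blk, List.length_take, List.length_drop]
  omega

theorem blk_append {n : ℕ} {w : List Bool} {c : Bool} {i : ℕ} (h : n * i + n ≤ w.length) :
    blk n (w ++ [c]) i = blk n w i := by
  simp only [blk, List.drop_append, List.take_append]
  have h1 : n * i - w.length = 0 := by omega
  have h2 : n - (w.drop (n * i)).length = 0 := by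
    simp only [List.length_drop]; omega
  have h4 : n - (w.length - n * i) = 0 := by omega
  simp [h1, h2, h4]

theorem blk_last {n : ℕ} {w : List Bool} {c : Bool} {q : ℕ}
    (hq : w.length = n * q + (n - 1)) (hn : 1 ≤ n) :
    blk n (w ++ [c]) q = w.drop (n * q) ++ [c] := by
  simp only [blk, List.drop_append]
  have h1 : n * q - w.length = 0 := by omega
  rw [h1]
  simp only [List.drop_zero]
  apply List.take_of_length_le
  simp only [List.length_append, List.length_drop, List.length_cons, List.length_nil]
  omega

theorem eval_eq (n : ℕ) (hn : 1 ≤ n) (w : List Bool) :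
    (M n hn).evalFrom (M n hn).start w = F n hn w := by
  induction w using List.reverseRecOn with
  | nil =>
    simp only [DFA.evalFrom_nil, M, F]
    refine Prod.ext ?_ (Prod.ext ?_ ?_)
    · simp [Set.eq_empty_iff_forall_notMem]
    · simp
    · simp
  | append_singleton w c ih =>
    rw [DFA.evalFrom_append_singleton, ih]
    have h1 := Nat.mod_add_div w.length n
    have h2 := Nat.mod_lt w.length (by omega : 0 < n)
    set q := w.length / n with hqdef
    set r := w.length % n with hrdef
    have hρlen : (w.drop (n * q)).length = r := by
      simp only [List.length_drop]; omega
    have hnq : n * q ≤ w.length := by omega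
    by_cases h : r + 1 = n
    · -- a block completes
      have hms : n * (q + 1) = n * q + n := by rw [Nat.mul_succ]
      have hq' : (w ++ [c]).length / n = q + 1 := by
        have hl : (w ++ [c]).length = n * (q + 1) := by
          simp only [List.length_append, List.length_cons, List.length_nil]
          omega
        rw [hl, Nat.mul_div_cancel_left _ (by omega : 0 < n)]
      have hlast : blk n (w ++ [c]) q = w.drop (n * q) ++ [c] :=
        blk_last (by omega) hn
      have hblocks : ∀ i < q, blk n (w ++ [c]) i = blk n w i := by
        intro i hi
        exact blk_append (by nlinarith [Nat.mul_le_mul_left n (by omega : i + 1 ≤ q)])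
      simp only [M, F, ← hqdef, hρlen, dif_pos h]
      refine Prod.ext ?_ (Prod.ext ?_ ?_)
      · ext v
        simp only [Set.mem_insert_iff, Set.mem_setOf_eq, hq']
        constructor
        · rintro (rfl | ⟨i, hi, hv⟩)
          · exact ⟨q, by omega, by rw [hlast]; rfl⟩
          · exact ⟨i, by omega, by rw [hv, hblocks i hi]⟩
        · rintro ⟨i, hi, hv⟩
          rcases Nat.lt_or_ge i q with hiq | hiq
          · exact Or.inr ⟨i, hiq, by rw [hv, hblocks i hiq]⟩
          · left
            have hiq2 : i = q := by omega
            subst hiq2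
            apply Subtype.ext
            show v.toList = _
            rw [hv, hlast]
      · apply Subtype.ext
        simp only [hq']
        rw [eq_comm]
        apply List.drop_eq_nil_of_le
        simp only [List.length_append, List.length_cons, List.length_nil]
        omega
      · simp only [hq', Nat.add_sub_cancel]
        apply propext
        constructor
        · rintro ⟨i, hi, hv⟩
          refine ⟨i, by omega, ?_⟩
          rw [hblocks i hi, hlast, ← hv]
          rfl
        · rintro ⟨i, hi, hv⟩
          have hiq : i < q := by omega
          rw [hblocks i hiq, hlast] at hv
          refine ⟨i, hiq, ?_⟩
          show List.Vector.toList _ = _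
          rw [hv]
          rfl
    · -- within a block
      have hq' : (w ++ [c]).length / n = q := by
        have hl : (w ++ [c]).length = n * q + (r + 1) := by
          simp only [List.length_append, List.length_cons, List.length_nil]; omega
        rw [hl, Nat.mul_add_div (by omega : 0 < n), Nat.div_eq_of_lt (by omega)]
        omega
      have hblocks : ∀ i < q, blk n (w ++ [c]) i = blk n w i := by
        intro i hi
        exact blk_append (by nlinarith [Nat.mul_le_mul_left n (by omega : i + 1 ≤ q)])
      simp only [M, F, ← hqdef, hρlen, dif_neg (by omega : ¬ (r + 1 = n))]
      refine Prod.ext ?_ (Prod.ext ?_ ?_)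
      · ext v
        simp only [Set.mem_setOf_eq, hq']
        constructor
        · rintro ⟨i, hi, hv⟩
          exact ⟨i, hi, by rw [hv, hblocks i hi]⟩
        · rintro ⟨i, hi, hv⟩
          exact ⟨i, hi, by rw [hv, hblocks i hi]⟩
      · apply Subtype.ext
        simp only [hq', List.drop_append]
        have : n * q - w.length = 0 := by omega
        simp [this]
      · simp only [hq']
        apply propext
        constructor
        · rintro ⟨i, hi, hv⟩
          refine ⟨i, hi, ?_⟩
          rw [hblocks i (by omega), hblocks (q - 1) (by omega), hv]
        · rintro ⟨i, hi, hv⟩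
          refine ⟨i, hi, ?_⟩
          rw [hblocks i (by omega), hblocks (q - 1) (by omega)] at hv
          exact hv

theorem join_blocks (n : ℕ) (w : List Bool) (q : ℕ) :
    ((List.range q).map (fun i => blk n w i)).flatten = w.take (n * q) := by
  induction q with
  | zero => simp
  | succ q ih =>
    rw [List.range_succ, List.map_append, List.flatten_append, ih]
    simp only [List.map_cons, List.map_nil, List.flatten_cons, List.flatten_nil, List.append_nil]
    rw [Nat.mul_succ, List.take_add]
    rfl

theorem blk_join {n : ℕ} (L : List (List Bool)) (hL : ∀ y ∈ L, y.length = n) :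
    ∀ i (h : i < L.length), blk n L.flatten i = L[i] := by
  induction L with
  | nil => intro i h; simp at h
  | cons y T ih =>
    intro i h
    have hy : y.length = n := hL y (by simp)
    cases i with
    | zero =>
      simp only [blk, Nat.mul_zero, List.flatten_cons, List.drop_zero,
        List.take_append, hy, Nat.sub_self, List.take_zero, List.append_nil]
      simpa using List.take_of_length_le (by omega)
    | succ i =>
      have h1 : n * (i + 1) ≥ y.length := by rw [hy]; nlinarith
      simp only [blk, List.flatten_cons, List.drop_append,
        List.drop_eq_nil_of_le h1, List.nil_append]
      have h2 : n * (i + 1) - y.length = n * i := by rw [hy, Nat.mul_succ]; omega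
      rw [h2]
      have := ih (fun y hy => hL y (by simp [hy])) i (by simpa using h)
      simp only [blk] at this
      rw [this]
      simp

theorem mem_Kn_iff {n : ℕ} (hn : 1 ≤ n) (w : List Bool) :
    w ∈ Kn n ↔ (w.drop (n * (w.length / n)) = [] ∧
      ∃ i, i + 1 < w.length / n ∧ blk n w i = blk n w (w.length / n - 1)) := by
  constructor
  · rintro ⟨l, x, hl, hlen, hx, hmem, rfl⟩
    rw [join_eq]
    set L := l ++ [x] with hLdef
    have hL : ∀ y ∈ L, y.length = n := by
      intro y hy
      rcases List.mem_append.mp hy with h | h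
      · exact hlen y h
      · simp at h; subst h; exact hx
    have hjoin : l.flatten ++ x = L.flatten := by simp [hLdef]
    have hLlen : L.flatten.length = n * L.length := by
      have : L.map List.length = List.replicate L.length n := by
        rw [List.eq_replicate_iff]
        refine ⟨by simp, ?_⟩
        intro b hb
        simp only [List.mem_map] at hb
        obtain ⟨y, hy, rfl⟩ := hb
        exact hL y hy
      rw [List.length_flatten, this, List.sum_replicate, smul_eq_mul, Nat.mul_comm]
    have hk : 1 ≤ l.length := by
      rcases l with _ | _
      · exact absurd rfl hl
      · simp
    have hLL : L.length = l.length + 1 := by simp [hLdef]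
    rw [hjoin]
    have hq : L.flatten.length / n = L.length := by
      rw [hLlen, Nat.mul_div_cancel_left _ (by omega : 0 < n)]
    obtain ⟨j, hj, hjx⟩ := List.mem_iff_getElem.mp hmem
    refine ⟨?_, j, ?_, ?_⟩
    · apply List.drop_eq_nil_of_le
      rw [hq, hLlen]
    · omega
    · rw [hq]
      have h1 : blk n L.flatten j = L[j]'(by omega) := blk_join L hL j (by omega)
      have h2 : blk n L.flatten (L.length - 1) = L[L.length - 1]'(by omega) :=
        blk_join L hL _ (by omega)
      rw [h1, h2]
      have h3 : L[j]'(by omega) = l[j]'hj := List.getElem_append_left (by omega)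
      have h4 : L[L.length - 1]'(by omega) = x := by
        have : L.length - 1 = l.length := by omega
        simp only [this, hLdef]
        exact List.getElem_concat_length (l := l) (a := x) (by simp) (by simp)
      rw [h3, h4, hjx]
  · rintro ⟨hdrop, i, hi, hblk⟩
    set q := w.length / n with hqdef
    have hfold : n * (w.length / n) = n * q := rfl
    have h1 := Nat.mod_add_div w.length n
    have hlen : w.length = n * q := by
      have hd0 : w.length - n * q = 0 := by
        have := congrArg List.length hdrop
        simpa using this
      omega
    refine ⟨(List.range (q - 1)).map (fun i => blk n w i), blk n w (q - 1), ?_, ?_, ?_, ?_, ?_⟩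
    · simp only [ne_eq, List.map_eq_nil_iff, List.range_eq_nil]
      omega
    · intro y hy
      simp only [List.mem_map, List.mem_range] at hy
      obtain ⟨j, hj, rfl⟩ := hy
      exact blk_length (by
        have e1 := Nat.mul_le_mul_left n (by omega : j + 1 ≤ q)
        rw [Nat.mul_succ] at e1
        omega)
    · exact blk_length (by
        have e1 := Nat.mul_le_mul_left n (by omega : (q - 1) + 1 ≤ q)
        rw [Nat.mul_succ] at e1
        omega)
    · rw [← hblk]
      exact List.mem_map.mpr ⟨i, List.mem_range.mpr (by omega), rfl⟩
    · rw [join_eq, join_blocks]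
      have h2 : blk n w (q - 1) = (w.drop (n * (q - 1))).take n := rfl
      rw [h2, ← List.take_add]
      obtain ⟨m, hm⟩ : ∃ m, q = m + 1 := ⟨q - 1, by omega⟩
      have h3 : n * (q - 1) + n = n * q := by
        rw [hm]
        simp [Nat.mul_succ]
      rw [h3, ← hlen, List.take_length]

end KnAux

/-- The language `K_n` is regular. -/
theorem Kn_isRegular (n : ℕ) (hn : 1 ≤ n) : Language.IsRegular (Kn n) := by
  refine ⟨KnAux.St n, inferInstance, KnAux.M n hn, ?_⟩
  ext w
  rw [DFA.mem_accepts]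
  show (KnAux.M n hn).evalFrom (KnAux.M n hn).start w ∈ (KnAux.M n hn).accept ↔ _
  rw [KnAux.eval_eq n hn w]
  rw [KnAux.mem_Kn_iff hn w]
  simp only [KnAux.M, KnAux.F, Set.mem_setOf_eq]
end

section
/- For every integer n ≥ 1, the language K_n has at least 2^(2^n) distinct left quotients. Concretely: for any two nonempty lists l and l' of words over {a,b}, each word of length n, if the set of elements occurring in l differs from the set of elements occurring in l', then the left quotients { z | l.join ++ z ∈ K_n } and { z | l'.join ++ z ∈ K_n } are distinct; moreover each such quotient differs from the left quotient of K_n by the empty word. Hence there is a family of 2^(2^n) words of pairwise distinct left quotients with respect to K_n. -/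
lemma len_join (n : ℕ) : ∀ (l : List (List Bool)), (∀ y ∈ l, y.length = n) →
    l.flatten.length = n * l.length := by
  intro l
  induction l with
  | nil => simp
  | cons a t ih =>
    intro h
    simp only [List.flatten_cons, List.length_append, List.length_cons]
    rw [ih (fun y hy => h y (by simp [hy])), h a (by simp)]
    ring

lemma join_inj (n : ℕ) : ∀ (l l' : List (List Bool)),
    (∀ y ∈ l, y.length = n) → (∀ y ∈ l', y.length = n) →
    l.length = l'.length → l.flatten = l'.flatten → l = l' := by
  intro l
  induction l with
  | nil => intro l' _ _ hlen _; cases l' <;> simp_all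
  | cons a t ih =>
    intro l' h h' hlen hj
    cases l' with
    | nil => simp at hlen
    | cons b t' =>
      simp only [List.flatten_cons] at hj
      have hab : a.length = b.length := by
        rw [h a (by simp), h' b (by simp)]
      obtain ⟨h1, h2⟩ := List.append_inj hj hab
      have := ih t' (fun y hy => h y (by simp [hy])) (fun y hy => h' y (by simp [hy]))
        (by simpa using hlen) h2
      simp [h1, this]

lemma mem_quot (n : ℕ) (hn : 1 ≤ n) (l : List (List Bool)) (hl : l ≠ [])
    (h : ∀ y ∈ l, y.length = n) (x : List Bool) (hx : x.length = n) :
    l.flatten ++ x ∈ Kn n ↔ x ∈ l := by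
  constructor
  · rintro ⟨l2, x2, hne2, h2, hx2, hmem2, heq⟩
    have hlen : l.length = l2.length := by
      have hle := congrArg List.length heq
      rw [List.length_append, List.length_append, len_join n l h, len_join n l2 h2,
        hx, hx2] at hle
      exact Nat.eq_of_mul_eq_mul_left hn (Nat.add_right_cancel hle)
    have key : l ++ [x] = l2 ++ [x2] := by
      apply join_inj n
      · intro y hy; rcases List.mem_append.1 hy with hy | hy
        · exact h y hy
        · simp at hy; simp [hy, hx]
      · intro y hy; rcases List.mem_append.1 hy with hy | hy
        · exact h2 y hy
        · simp at hy; simp [hy, hx2]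
      · simp [hlen]
      · simpa using heq
    obtain ⟨hl2, hx2'⟩ := List.append_inj' key (by simp)
    have hxx : x = x2 := by injection hx2'
    rw [hl2, hxx]
    exact hmem2
  · intro hmem
    exact ⟨l, x, hl, h, hx, hmem, rfl⟩

lemma short_not_mem (n : ℕ) (hn : 1 ≤ n) (x : List Bool) (hx : x.length = n) :
    x ∉ Kn n := by
  rintro ⟨l2, x2, hne2, h2, hx2, hmem2, heq⟩
  have := congrArg List.length heq
  have hl2 : 1 ≤ l2.length := List.length_pos_iff.2 hne2
  simp only [List.length_append, len_join n l2 h2, hx, hx2] at this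
  nlinarith

/-- `K_n` has at least `2^(2^n)` distinct left quotients: nonempty lists of
length-`n` blocks with different underlying sets of blocks give different left
quotients, each of these quotients differs from the quotient by the empty word,
and hence there are `2^(2^n)` words with pairwise distinct left quotients. -/
theorem Kn_left_quotients (n : ℕ) (hn : 1 ≤ n) :
    (∀ l l' : List (List Bool), l ≠ [] → l' ≠ [] →
        (∀ y ∈ l, y.length = n) → (∀ y ∈ l', y.length = n) →
        { x | x ∈ l } ≠ { x | x ∈ l' } →
        { z | l.flatten ++ z ∈ Kn n } ≠ { z | l'.flatten ++ z ∈ Kn n }) ∧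
    (∀ l : List (List Bool), l ≠ [] → (∀ y ∈ l, y.length = n) →
        { z | l.flatten ++ z ∈ Kn n } ≠ { z | ([] : List Bool) ++ z ∈ Kn n }) ∧
    (∃ u : Fin (2 ^ (2 ^ n)) → List Bool, ∀ i j, i ≠ j →
        { z | u i ++ z ∈ Kn n } ≠ { z | u j ++ z ∈ Kn n }) := by
  have part1 : ∀ l l' : List (List Bool), l ≠ [] → l' ≠ [] →
      (∀ y ∈ l, y.length = n) → (∀ y ∈ l', y.length = n) →
      { x | x ∈ l } ≠ { x | x ∈ l' } →
      { z | l.flatten ++ z ∈ Kn n } ≠ { z | l'.flatten ++ z ∈ Kn n } := by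
    intro l l' hl hl' h h' hsets hq
    apply hsets
    ext x
    constructor
    · intro hx
      have hxn := h x hx
      have : l.flatten ++ x ∈ Kn n := (mem_quot n hn l hl h x hxn).2 hx
      have : l'.flatten ++ x ∈ Kn n := (Set.ext_iff.1 hq x).1 this
      exact (mem_quot n hn l' hl' h' x hxn).1 this
    · intro hx
      have hxn := h' x hx
      have : l'.flatten ++ x ∈ Kn n := (mem_quot n hn l' hl' h' x hxn).2 hx
      have : l.flatten ++ x ∈ Kn n := (Set.ext_iff.1 hq x).2 this
      exact (mem_quot n hn l hl h x hxn).1 this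
  have part2 : ∀ l : List (List Bool), l ≠ [] → (∀ y ∈ l, y.length = n) →
      { z | l.flatten ++ z ∈ Kn n } ≠ { z | ([] : List Bool) ++ z ∈ Kn n } := by
    intro l hl h hq
    obtain ⟨y, hy⟩ := List.exists_mem_of_ne_nil l hl
    have hyn := h y hy
    have h1 : l.flatten ++ y ∈ Kn n := (mem_quot n hn l hl h y hyn).2 hy
    have h2 : ([] : List Bool) ++ y ∈ Kn n := (Set.ext_iff.1 hq y).1 h1
    simp only [List.nil_append] at h2
    exact short_not_mem n hn y hyn h2
  refine ⟨part1, part2, ?_⟩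
  have hcard : Fintype.card (Finset (List.Vector Bool n)) = 2 ^ (2 ^ n) := by
    rw [Fintype.card_finset, card_vector, Fintype.card_bool]
  set e : Fin (2 ^ (2 ^ n)) ≃ Finset (List.Vector Bool n) :=
    (Fintype.equivFinOfCardEq hcard).symm with he
  refine ⟨fun i => ((e i).toList.map List.Vector.toList).flatten, ?_⟩
  intro i j hij hq
  apply hij
  apply e.injective
  have hblocks : ∀ S : Finset (List.Vector Bool n),
      ∀ y ∈ S.toList.map List.Vector.toList, y.length = n := by
    rintro S y hy
    simp only [List.mem_map] at hy
    obtain ⟨v, _, rfl⟩ := hy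
    exact v.2
  by_cases hi : e i = ∅
  · by_cases hj : e j = ∅
    · rw [hi, hj]
    · exfalso
      have hne : (e j).toList.map List.Vector.toList ≠ [] := by
        simp [Finset.toList_eq_nil, hj]
      refine part2 _ hne (hblocks (e j)) ?_
      rw [← hq]
      simp [hi]
  · by_cases hj : e j = ∅
    · exfalso
      have hne : (e i).toList.map List.Vector.toList ≠ [] := by
        simp [Finset.toList_eq_nil, hi]
      refine part2 _ hne (hblocks (e i)) ?_
      rw [hq]
      simp [hj]
    · have hnei : (e i).toList.map List.Vector.toList ≠ [] := by
        simp [Finset.toList_eq_nil, hi]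
      have hnej : (e j).toList.map List.Vector.toList ≠ [] := by
        simp [Finset.toList_eq_nil, hj]
      by_contra hne
      refine part1 _ _ hnei hnej (hblocks (e i)) (hblocks (e j)) ?_ hq
      intro hsets
      apply hne
      ext v
      have : v.toList ∈ {x | x ∈ (e i).toList.map List.Vector.toList} ↔
          v.toList ∈ {x | x ∈ (e j).toList.map List.Vector.toList} := by rw [hsets]
      simp only [Set.mem_setOf_eq, List.mem_map] at this
      constructor
      · intro hv
        obtain ⟨w, hw, hwv⟩ := this.1 ⟨v, by simp [hv], rfl⟩
        rwa [← List.Vector.toList_injective hwv, ← Finset.mem_toList]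
      · intro hv
        obtain ⟨w, hw, hwv⟩ := this.2 ⟨v, by simp [hv], rfl⟩
        rwa [← List.Vector.toList_injective hwv, ← Finset.mem_toList]
end

section
/- For every integer n ≥ 1, the family of pairs { (x, x) : x a word of length n over {a,b} } is a fooling set of size 2^n for K_n: for every word x of length n, x ++ x ∈ K_n, and for all distinct words x, y of length n, x ++ y ∉ K_n or y ++ x ∉ K_n. -/
/-- The family `{(x, x) : x of length n}` is a fooling set of size `2^n` for `K_n`:
there are `2^n` words of length `n`, `x ++ x ∈ K_n` for each of them, and for
distinct `x`, `y` of length `n` one of `x ++ y`, `y ++ x` is not in `K_n`. -/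
theorem Kn_fooling_set (n : ℕ) (hn : 1 ≤ n) :
    Set.ncard { x : List Bool | x.length = n } = 2 ^ n ∧
    (∀ x : List Bool, x.length = n → x ++ x ∈ Kn n) ∧
    (∀ x y : List Bool, x.length = n → y.length = n → x ≠ y →
        x ++ y ∉ Kn n ∨ y ++ x ∉ Kn n) := by
  have key : ∀ x y : List Bool, x.length = n → y.length = n → x ++ y ∈ Kn n → x = y := by
    intro x y hx hy hmem
    obtain ⟨l, z, hne, hlen, hz, hzl, heq⟩ := hmem
    have hjoin : ∀ m : List (List Bool), (∀ y ∈ m, y.length = n) →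
        m.flatten.length = n * m.length := by
      intro m hm
      induction m with
      | nil => simp
      | cons a t ih =>
        simp only [List.flatten_cons, List.length_append, List.length_cons]
        rw [hm a (by simp), ih (fun y hy => hm y (List.mem_cons_of_mem a hy))]
        ring
    have hlen2 : (x ++ y).length = (l.flatten ++ z).length := by rw [heq]
    simp only [List.length_append, hx, hy, hz, hjoin l hlen] at hlen2
    have hl1 : l.length = 1 := Nat.eq_of_mul_eq_mul_left (by omega : 0 < n) (by omega)
    obtain ⟨w, hw⟩ := List.length_eq_one_iff.mp hl1
    subst hw
    have hj : ([w] : List (List Bool)).flatten = w := by simp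
    rw [hj] at heq
    have hwlen : w.length = n := hlen w (by simp)
    have hxw : x = w := List.append_inj_left heq (by rw [hx, hwlen])
    have hzy : y = z := List.append_inj_right heq (by rw [hx, hwlen])
    simp only [List.mem_singleton] at hzl
    rw [hxw, ← hzl, ← hzy]
  refine ⟨?_, ?_, ?_⟩
  · have e : {x : List Bool | x.length = n} ≃ (Fin n → Bool) :=
      (Equiv.subtypeEquivRight (fun x => by simp)).trans
        ((Equiv.refl (List.Vector Bool n)).trans (Equiv.vectorEquivFin Bool n))
    rw [← Nat.card_coe_set_eq, Nat.card_congr e, Nat.card_eq_fintype_card]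
    simp
  · intro x hx
    exact ⟨[x], x, by simp, by simp [hx], hx, by simp, by simp⟩
  · intro x y hx hy hne
    exact Or.inl (fun h => hne (key x y hx hy h))
end

section
/- For every integer n ≥ 1 and all distinct words x and y of length n over {a,b}, the left quotients of J_n by x and by y are distinct; consequently J_n has at least 2^n distinct left quotients (witnessed by the 2^n words of length n). -/
lemma Jn_quot_ne (n : ℕ) (hn : 1 ≤ n) :
    ∀ x y : List Bool, x.length = n → y.length = n → x ≠ y →
        { z | x ++ z ∈ Jn n } ≠ { z | y ++ z ∈ Jn n } := by
  intro x y hx hy hxy heq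
  have hmemx : x ∈ {z | x ++ z ∈ Jn n} := by
    show x ++ x ∈ Jn n
    exact ⟨[x], x, by simp, by simp [hx], hx, by simp, by simp⟩
  rw [heq] at hmemx
  obtain ⟨l, x', hl, hlen, hx', hmem, heq2⟩ := hmemx
  obtain ⟨c, rest, rfl⟩ := List.exists_cons_of_ne_nil hl
  have hc : c.length = n := hlen c (by simp)
  have hlength : (y ++ x).length = (x' ++ (c :: rest).flatten).length := by rw [heq2]
  simp [hx, hy, hx', hc] at hlength
  have hrest : rest.flatten = [] := List.length_eq_zero_iff.mp (by
    rw [List.length_flatten]; omega)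
  simp only [List.flatten_cons, hrest, List.append_nil] at heq2
  have := List.append_inj heq2 (by rw [hy, hx'])
  obtain ⟨rfl, rfl⟩ := this
  rcases List.mem_cons.mp hmem with h | h
  · exact hxy h.symm
  · have : y = [] := (List.flatten_eq_nil_iff.mp hrest) y h
    rw [this] at hx'
    simp at hx'
    omega

/-- Distinct words of length `n` have distinct left quotients with respect to `J_n`;
consequently `J_n` has at least `2^n` distinct left quotients, witnessed by the
`2^n` words of length `n`. -/
theorem Jn_left_quotients (n : ℕ) (hn : 1 ≤ n) :
    (∀ x y : List Bool, x.length = n → y.length = n → x ≠ y →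
        { z | x ++ z ∈ Jn n } ≠ { z | y ++ z ∈ Jn n }) ∧
    (∃ u : Fin (2 ^ n) → List Bool, (∀ i, (u i).length = n) ∧
        ∀ i j, i ≠ j → { z | u i ++ z ∈ Jn n } ≠ { z | u j ++ z ∈ Jn n }) := by
  refine ⟨Jn_quot_ne n hn, ?_⟩
  refine ⟨fun i => List.ofFn (fun k : Fin n => Nat.testBit i.val k), fun i => by simp, ?_⟩
  intro i j hij
  apply Jn_quot_ne n hn _ _ (by simp) (by simp)
  intro h
  apply hij
  have hfn := List.ofFn_inj.mp h
  have : ∀ k, Nat.testBit i.val k = Nat.testBit j.val k := by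
    intro k
    by_cases hk : k < n
    · exact congrFun hfn ⟨k, hk⟩
    · rw [Nat.testBit_lt_two_pow, Nat.testBit_lt_two_pow]
      · exact lt_of_lt_of_le j.isLt (Nat.pow_le_pow_right (by norm_num) (le_of_not_gt hk))
      · exact lt_of_lt_of_le i.isLt (Nat.pow_le_pow_right (by norm_num) (le_of_not_gt hk))
  exact Fin.ext (Nat.eq_of_testBit_eq this)
end
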